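/- (Corollary (i)) Γ̃(5,5) is a subgroup of Sp(4,ℤ) contained in Γ(5,5): it contains the identity, is closed under matrix multiplication and inverses within Sp(4,ℤ), and every element of Γ̃(5,5) lies in Γ(5,5). -/

import Mathlib

/-!
Modulo 5, an element of `Γ(5,5)` is unitriangular for the ordering 0, 1, 3, 2 of the basis, so
these reductions form a group; the inverse of a symplectic matrix is `-J Xᵀ J`, whose entries are
those of `X` permuted up to sign, and this permutation preserves the congruences defining `Γ(5,5)`.
On `Γ(5,5)` the residues mod 25 `d₁ X = X₃₁ - 15 X₁₂` and `d₂ X = X₃₂ - 20 X₁₂² - 20 X₁₂` satisfy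
`d₁ (X Y) = d₁ X + d₁ Y` and `d₂ (X Y) = d₂ X + d₂ Y + d₁ X · Y₁₂`: products of entries that are
both divisible by 5 vanish mod 25. Hence the common zero set `Γ̃(5,5)` of `d₁` and `d₂` is closed
under products, and, as `d₁ 1 = d₂ 1 = 0`, under inverses.
-/

open Matrix

/-- The standard symplectic form matrix. -/
def Jsym : Matrix (Fin 4) (Fin 4) ℤ :=
  !![0, 0, 1, 0; 0, 0, 0, 1; -1, 0, 0, 0; 0, -1, 0, 0]

/-- `Sp(4, ℤ)`: the set of symplectic `4 × 4` integer matrices. -/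
def Sp4Z : Set (Matrix (Fin 4) (Fin 4) ℤ) := {X | Xᵀ * Jsym * X = Jsym}

/-- The congruence subgroup `Γ(5,5)` of Chen–Yang–Yui. -/
def Gamma55 : Set (Matrix (Fin 4) (Fin 4) ℤ) :=
  {X | X ∈ Sp4Z ∧
    X 0 0 ≡ 1 [ZMOD 5] ∧ X 1 1 ≡ 1 [ZMOD 5] ∧ X 2 2 ≡ 1 [ZMOD 5] ∧ X 3 3 ≡ 1 [ZMOD 5] ∧
    X 1 0 ≡ 0 [ZMOD 5] ∧ X 2 0 ≡ 0 [ZMOD 5] ∧ X 2 1 ≡ 0 [ZMOD 5] ∧ X 2 3 ≡ 0 [ZMOD 5] ∧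
    X 3 0 ≡ 0 [ZMOD 5] ∧ X 3 1 ≡ 0 [ZMOD 5]}

/-- The smaller congruence subgroup `Γ̃(5,5)`. -/
def GammaTilde55 : Set (Matrix (Fin 4) (Fin 4) ℤ) :=
  {X | X ∈ Gamma55 ∧
    X 2 0 ≡ 15 * X 0 1 [ZMOD 25] ∧
    X 2 1 ≡ 20 * (X 0 1) ^ 2 + 20 * X 0 1 [ZMOD 25]}

theorem Int.ModEq.mul_left_of_modEq_zero {a b c n m : ℤ} (hc : c ≡ 0 [ZMOD n])
    (h : a ≡ b [ZMOD m]) : c * a ≡ c * b [ZMOD n * m] :=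
  Int.modEq_iff_dvd.2 (by rw [← mul_sub]; exact mul_dvd_mul (Int.modEq_zero_iff_dvd.1 hc) h.dvd)

theorem ZMod.natCast_mul_intCast_eq_of_modEq {n : ℕ} {a b : ℤ} (h : a ≡ b [ZMOD n]) :
    (n * a : ZMod (n * n)) = n * b := by
  exact_mod_cast (ZMod.intCast_eq_intCast_iff _ _ (n * n)).2 (by exact_mod_cast h.mul_left' (c := n))

def IsGamma55Pattern {R : Type*} [Semiring R] (M : Matrix (Fin 4) (Fin 4) R) : Prop :=
  M 0 0 = 1 ∧ M 1 1 = 1 ∧ M 2 2 = 1 ∧ M 3 3 = 1 ∧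
    M 1 0 = 0 ∧ M 2 0 = 0 ∧ M 2 1 = 0 ∧ M 2 3 = 0 ∧ M 3 0 = 0 ∧ M 3 1 = 0

namespace IsGamma55Pattern

variable {R : Type*}

theorem one [Semiring R] : IsGamma55Pattern (1 : Matrix (Fin 4) (Fin 4) R) := by
  simp [IsGamma55Pattern]

theorem mul [Semiring R] {M N : Matrix (Fin 4) (Fin 4) R} (hM : IsGamma55Pattern M)
    (hN : IsGamma55Pattern N) : IsGamma55Pattern (M * N) := by
  obtain ⟨hM₀₀, hM₁₁, hM₂₂, hM₃₃, hM₁₀, hM₂₀, hM₂₁, hM₂₃, hM₃₀, hM₃₁⟩ := hM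
  obtain ⟨hN₀₀, hN₁₁, hN₂₂, hN₃₃, hN₁₀, hN₂₀, hN₂₁, hN₂₃, hN₃₀, hN₃₁⟩ := hN
  simp [IsGamma55Pattern, mul_apply, Fin.sum_univ_four, *]

end IsGamma55Pattern

def symplecticAdjoint {R : Type*} [Ring R] (M : Matrix (Fin 4) (Fin 4) R) :
    Matrix (Fin 4) (Fin 4) R :=
  !![M 2 2, M 3 2, -M 0 2, -M 1 2; M 2 3, M 3 3, -M 0 3, -M 1 3;
    -M 2 0, -M 3 0, M 0 0, M 1 0; -M 2 1, -M 3 1, M 0 1, M 1 1]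

theorem symplecticAdjoint_map {R S : Type*} [Ring R] [Ring S] (f : R →+* S)
    (M : Matrix (Fin 4) (Fin 4) R) :
    (symplecticAdjoint M).map f = symplecticAdjoint (M.map f) := by
  ext i j
  fin_cases i <;> fin_cases j <;> simp [symplecticAdjoint]

theorem IsGamma55Pattern.symplecticAdjoint {R : Type*} [Ring R] {M : Matrix (Fin 4) (Fin 4) R}
    (hM : IsGamma55Pattern M) : IsGamma55Pattern (symplecticAdjoint M) := by
  obtain ⟨hM₀₀, hM₁₁, hM₂₂, hM₃₃, hM₁₀, hM₂₀, hM₂₁, hM₂₃, hM₃₀, hM₃₁⟩ := hM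
  simp [IsGamma55Pattern, _root_.symplecticAdjoint, *]

theorem Jsym_mul_Jsym : Jsym * Jsym = -1 := by
  ext i j
  fin_cases i <;> fin_cases j <;> simp [Jsym, mul_apply, Fin.sum_univ_four]

theorem symplecticAdjoint_eq_neg_Jsym_mul (X : Matrix (Fin 4) (Fin 4) ℤ) :
    symplecticAdjoint X = -(Jsym * Xᵀ * Jsym) := by
  ext i j
  fin_cases i <;> fin_cases j <;>
    simp [symplecticAdjoint, Jsym, mul_apply, vecMul, dotProduct, Fin.sum_univ_four]

namespace Sp4Z

theorem one_mem : (1 : Matrix (Fin 4) (Fin 4) ℤ) ∈ Sp4Z := by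
  simp [Sp4Z]

theorem mul_mem {X Y : Matrix (Fin 4) (Fin 4) ℤ} (hX : X ∈ Sp4Z) (hY : Y ∈ Sp4Z) :
    X * Y ∈ Sp4Z := by
  change (X * Y)ᵀ * Jsym * (X * Y) = Jsym
  calc (X * Y)ᵀ * Jsym * (X * Y) = Yᵀ * (Xᵀ * Jsym * X) * Y := by
        simp only [transpose_mul, Matrix.mul_assoc]
    _ = Jsym := by rw [hX, hY]

theorem mem_of_mul_eq_one {X Y : Matrix (Fin 4) (Fin 4) ℤ} (hX : X ∈ Sp4Z) (h : X * Y = 1) :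
    Y ∈ Sp4Z := by
  change Yᵀ * Jsym * Y = Jsym
  calc Yᵀ * Jsym * Y = Yᵀ * (Xᵀ * Jsym * X) * Y := by rw [hX]
    _ = (X * Y)ᵀ * Jsym * (X * Y) := by simp only [transpose_mul, Matrix.mul_assoc]
    _ = Jsym := by simp [h]

theorem symplecticAdjoint_mul_self {X : Matrix (Fin 4) (Fin 4) ℤ} (hX : X ∈ Sp4Z) :
    symplecticAdjoint X * X = 1 := by
  calc symplecticAdjoint X * X = -(Jsym * (Xᵀ * Jsym * X)) := by
        simp only [symplecticAdjoint_eq_neg_Jsym_mul, Matrix.neg_mul, Matrix.mul_assoc]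
    _ = 1 := by rw [hX, Jsym_mul_Jsym, neg_neg]

end Sp4Z

namespace Gamma55

theorem mem_iff {X : Matrix (Fin 4) (Fin 4) ℤ} :
    X ∈ Gamma55 ↔ X ∈ Sp4Z ∧ IsGamma55Pattern (X.map (Int.castRingHom (ZMod 5))) := by
  have key (a b : ℤ) : a ≡ b [ZMOD 5] ↔ (a : ZMod 5) = b :=
    (ZMod.intCast_eq_intCast_iff a b 5).symm
  simp only [Gamma55, Set.mem_ofPred_eq, IsGamma55Pattern, map_apply, Int.coe_castRingHom, key,
    Int.cast_one, Int.cast_zero]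

theorem one_mem : (1 : Matrix (Fin 4) (Fin 4) ℤ) ∈ Gamma55 :=
  mem_iff.2 ⟨Sp4Z.one_mem, by simpa using IsGamma55Pattern.one⟩

theorem mul_mem {X Y : Matrix (Fin 4) (Fin 4) ℤ} (hX : X ∈ Gamma55) (hY : Y ∈ Gamma55) :
    X * Y ∈ Gamma55 := by
  rw [mem_iff] at *
  exact ⟨Sp4Z.mul_mem hX.1 hY.1, by rw [Matrix.map_mul]; exact hX.2.mul hY.2⟩

theorem mem_of_mul_eq_one {X Y : Matrix (Fin 4) (Fin 4) ℤ} (hX : X ∈ Gamma55)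
    (h : X * Y = 1) : Y ∈ Gamma55 := by
  rw [mem_iff] at *
  have hY : Y = symplecticAdjoint X :=
    (left_inv_eq_right_inv (Sp4Z.symplecticAdjoint_mul_self hX.1) h).symm
  refine ⟨Sp4Z.mem_of_mul_eq_one hX.1 h, ?_⟩
  rw [hY, symplecticAdjoint_map]
  exact hX.2.symplecticAdjoint

variable {X Y : Matrix (Fin 4) (Fin 4) ℤ}

theorem mul_apply_zero_one_modEq (hX : X ∈ Gamma55) (hY : Y ∈ Gamma55) :
    (X * Y) 0 1 ≡ X 0 1 + Y 0 1 [ZMOD 5] := by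
  obtain ⟨-, hX₀₀, -, -, -, -, -, -, -, -, -⟩ := hX
  obtain ⟨-, -, hY₁₁, -, -, -, -, hY₂₁, -, -, hY₃₁⟩ := hY
  calc (X * Y) 0 1 = X 0 0 * Y 0 1 + X 0 1 * Y 1 1 + X 0 2 * Y 2 1 + X 0 3 * Y 3 1 := by
        simp [mul_apply, Fin.sum_univ_four]
    _ ≡ 1 * Y 0 1 + X 0 1 * 1 + X 0 2 * 0 + X 0 3 * 0 [ZMOD 5] := by gcongr
    _ = X 0 1 + Y 0 1 := by ring

theorem mul_apply_two_zero_modEq (hX : X ∈ Gamma55) (hY : Y ∈ Gamma55) :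
    (X * Y) 2 0 ≡ X 2 0 + Y 2 0 [ZMOD 25] := by
  obtain ⟨-, -, -, hX₂₂, -, -, hX₂₀, hX₂₁, hX₂₃, -, -⟩ := hX
  obtain ⟨-, hY₀₀, -, -, -, hY₁₀, hY₂₀, -, -, hY₃₀, -⟩ := hY
  calc (X * Y) 2 0 = X 2 0 * Y 0 0 + X 2 1 * Y 1 0 + Y 2 0 * X 2 2 + X 2 3 * Y 3 0 := by
        simp [mul_apply, Fin.sum_univ_four]; ring
    _ ≡ X 2 0 * 1 + X 2 1 * 0 + Y 2 0 * 1 + X 2 3 * 0 [ZMOD 25] := by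
        gcongr ?_ + ?_ + ?_ + ?_
        · exact hX₂₀.mul_left_of_modEq_zero hY₀₀
        · exact hX₂₁.mul_left_of_modEq_zero hY₁₀
        · exact hY₂₀.mul_left_of_modEq_zero hX₂₂
        · exact hX₂₃.mul_left_of_modEq_zero hY₃₀
    _ = X 2 0 + Y 2 0 := by ring

theorem mul_apply_two_one_modEq (hX : X ∈ Gamma55) (hY : Y ∈ Gamma55) :
    (X * Y) 2 1 ≡ X 2 1 + Y 2 1 + X 2 0 * Y 0 1 [ZMOD 25] := by
  obtain ⟨-, -, -, hX₂₂, -, -, -, hX₂₁, hX₂₃, -, -⟩ := hX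
  obtain ⟨-, -, hY₁₁, -, -, -, -, hY₂₁, -, -, hY₃₁⟩ := hY
  calc (X * Y) 2 1 = X 2 0 * Y 0 1 + X 2 1 * Y 1 1 + Y 2 1 * X 2 2 + X 2 3 * Y 3 1 := by
        simp [mul_apply, Fin.sum_univ_four]; ring
    _ ≡ X 2 0 * Y 0 1 + X 2 1 * 1 + Y 2 1 * 1 + X 2 3 * 0 [ZMOD 25] := by
        gcongr X 2 0 * Y 0 1 + ?_ + ?_ + ?_
        · exact hX₂₁.mul_left_of_modEq_zero hY₁₁
        · exact hY₂₁.mul_left_of_modEq_zero hX₂₂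
        · exact hX₂₃.mul_left_of_modEq_zero hY₃₁
    _ = X 2 1 + Y 2 1 + X 2 0 * Y 0 1 := by ring

end Gamma55

namespace GammaTilde55

def defect₁ (X : Matrix (Fin 4) (Fin 4) ℤ) : ZMod 25 := X 2 0 - 15 * X 0 1

def defect₂ (X : Matrix (Fin 4) (Fin 4) ℤ) : ZMod 25 := X 2 1 - (20 * X 0 1 ^ 2 + 20 * X 0 1)

theorem defect₁_one : defect₁ 1 = 0 := by
  simp [defect₁]

theorem defect₂_one : defect₂ 1 = 0 := by
  simp [defect₂]

theorem mem_iff {X : Matrix (Fin 4) (Fin 4) ℤ} :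
    X ∈ GammaTilde55 ↔ X ∈ Gamma55 ∧ defect₁ X = 0 ∧ defect₂ X = 0 := by
  have key (a b : ℤ) : a ≡ b [ZMOD 25] ↔ (a : ZMod 25) = b :=
    (ZMod.intCast_eq_intCast_iff a b 25).symm
  simp only [GammaTilde55, Set.mem_ofPred_eq, key, defect₁, defect₂, sub_eq_zero]
  push_cast
  rfl

variable {X Y : Matrix (Fin 4) (Fin 4) ℤ}

theorem defect₁_mul (hX : X ∈ Gamma55) (hY : Y ∈ Gamma55) :
    defect₁ (X * Y) = defect₁ X + defect₁ Y := by
  have h₂₀ : ((X * Y) 2 0 : ZMod 25) = X 2 0 + Y 2 0 := by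
    exact_mod_cast (ZMod.intCast_eq_intCast_iff _ _ 25).2 (Gamma55.mul_apply_two_zero_modEq hX hY)
  have h₀₁ : (5 * (X * Y) 0 1 : ZMod 25) = 5 * (X 0 1 + Y 0 1 : ℤ) :=
    ZMod.natCast_mul_intCast_eq_of_modEq (n := 5) (Gamma55.mul_apply_zero_one_modEq hX hY)
  simp only [defect₁]
  push_cast at h₀₁ ⊢
  linear_combination h₂₀ - 3 * h₀₁

theorem defect₂_mul (hX : X ∈ Gamma55) (hY : Y ∈ Gamma55) :
    defect₂ (X * Y) = defect₂ X + defect₂ Y + defect₁ X * Y 0 1 := by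
  have h₂₁ : ((X * Y) 2 1 : ZMod 25) = X 2 1 + Y 2 1 + X 2 0 * Y 0 1 := by
    exact_mod_cast (ZMod.intCast_eq_intCast_iff _ _ 25).2 (Gamma55.mul_apply_two_one_modEq hX hY)
  have h₀₁ : (5 * (X * Y) 0 1 : ZMod 25) = 5 * (X 0 1 + Y 0 1 : ℤ) :=
    ZMod.natCast_mul_intCast_eq_of_modEq (n := 5) (Gamma55.mul_apply_zero_one_modEq hX hY)
  have h₀₁_sq : (5 * ((X * Y) 0 1 ^ 2 : ℤ) : ZMod 25) = 5 * ((X 0 1 + Y 0 1) ^ 2 : ℤ) :=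
    ZMod.natCast_mul_intCast_eq_of_modEq (n := 5) ((Gamma55.mul_apply_zero_one_modEq hX hY).pow 2)
  have h25 : (25 : ZMod 25) = 0 := rfl
  simp only [defect₁, defect₂]
  push_cast at h₀₁ h₀₁_sq ⊢
  linear_combination h₂₁ - 4 * h₀₁_sq - 4 * h₀₁ - (X 0 1 * Y 0 1 : ZMod 25) * h25

end GammaTilde55

theorem gammaTilde55_subgroup :
    (1 : Matrix (Fin 4) (Fin 4) ℤ) ∈ GammaTilde55 ∧
    (∀ X ∈ GammaTilde55, ∀ Y ∈ GammaTilde55, X * Y ∈ GammaTilde55) ∧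
    (∀ X ∈ GammaTilde55, ∀ Y : Matrix (Fin 4) (Fin 4) ℤ,
      X * Y = 1 → Y * X = 1 → Y ∈ GammaTilde55) ∧
    GammaTilde55 ⊆ Gamma55 := by
  open GammaTilde55 in
  simp only [mem_iff]
  refine ⟨⟨Gamma55.one_mem, defect₁_one, defect₂_one⟩, ?_, ?_, fun X hX => (mem_iff.1 hX).1⟩
  · rintro X ⟨hX, hX₁, hX₂⟩ Y ⟨hY, hY₁, hY₂⟩
    refine ⟨Gamma55.mul_mem hX hY, ?_, ?_⟩
    · rw [defect₁_mul hX hY, hX₁, hY₁, add_zero]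
    · rw [defect₂_mul hX hY, hX₁, hX₂, hY₂, zero_mul, add_zero, add_zero]
  · rintro X ⟨hX, hX₁, hX₂⟩ Y hXY -
    have hY := Gamma55.mem_of_mul_eq_one hX hXY
    have h₁ := defect₁_mul hX hY
    have h₂ := defect₂_mul hX hY
    rw [hXY, defect₁_one] at h₁
    rw [hXY, defect₂_one] at h₂
    exact ⟨hY, by linear_combination -h₁ - hX₁, by linear_combination -h₂ - hX₂ - Y 0 1 * hX₁⟩
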